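/- Let n ≥ 3 be an integer and let Gₙ be the group presented by generators a, b, s, t and relators ab = ba, s aⁿ s⁻¹ = ab, t bⁿ t⁻¹ = ab. Then Gₙ is not free-by-ℤ: there is no normal subgroup N of Gₙ isomorphic to a free group of finite rank with Gₙ/N isomorphic to ℤ. -/

import Mathlib

/-- Generators `a, b, s, t` of Wise's non-simple-curve groups. -/
def a17 : FreeGroup (Fin 4) := FreeGroup.of 0
def b17 : FreeGroup (Fin 4) := FreeGroup.of 1
def s17 : FreeGroup (Fin 4) := FreeGroup.of 2
def t17 : FreeGroup (Fin 4) := FreeGroup.of 3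

/-- Relators `ab = ba`, `s aⁿ s⁻¹ = ab`, `t bⁿ t⁻¹ = ab`. -/
def rels17 (n : ℕ) : Set (FreeGroup (Fin 4)) :=
  {a17 * b17 * (b17 * a17)⁻¹, s17 * a17 ^ n * s17⁻¹ * (a17 * b17)⁻¹,
    t17 * b17 ^ n * t17⁻¹ * (a17 * b17)⁻¹}

/-!
A homomorphism `χ : Gₙ → ℤ` satisfies `n χ(a) = χ(a) + χ(b) = n χ(b)`, so for `n ≥ 3` it kills
`a` and `b`, which therefore lie in the free kernel. By Nielsen–Schreier, commuting elements of a
free group generate a cyclic subgroup, so `a` and `b` would satisfy a nontrivial relation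
`aᵏ = bˡ`. This is impossible in the affine action of `Gₙ` on `ℝ` in which `a` and `b` translate
by `1` and `√2` and `s`, `t` act by homotheties about `0`.
-/

theorem FreeGroup.eq_of_commute_of {α : Type*} {u v : α}
    (h : Commute (FreeGroup.of u) (FreeGroup.of v)) : u = v := by
  classical
  by_contra huv
  let f : α → Equiv.Perm (Fin 3) := fun z => if z = u then Equiv.swap 0 1 else Equiv.swap 1 2
  have := h.map (FreeGroup.lift f)
  simp only [FreeGroup.lift_apply_of, f, ↓reduceIte, if_neg (Ne.symm huv)] at this
  exact absurd this.eq (by decide)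

theorem IsFreeGroup.isCyclic (G : Type*) [Group G] [IsFreeGroup G] [IsMulCommutative G] :
    IsCyclic G := by
  let e := IsFreeGroup.toFreeGroup G
  have : Subsingleton (IsFreeGroup.Generators G) := ⟨fun u v =>
    FreeGroup.eq_of_commute_of <| by
      simpa using (show Commute _ _ from mul_comm' (e.symm (.of u)) (e.symm (.of v))).map e⟩
  have : IsCyclic (FreeGroup (IsFreeGroup.Generators G)) := by
    cases isEmpty_or_nonempty (IsFreeGroup.Generators G) with
    | inl _ => infer_instance
    | inr h => have := uniqueOfSubsingleton h.some; infer_instance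
  exact isCyclic_of_surjective e.symm e.symm.surjective

theorem IsCyclic.exists_zpow_eq_zpow {G : Type*} [Group G] [IsCyclic G] (x y : G) :
    ∃ k l : ℤ, (k ≠ 0 ∨ l ≠ 0) ∧ x ^ k = y ^ l := by
  obtain ⟨g, hg⟩ := IsCyclic.exists_generator (α := G)
  obtain ⟨p, rfl⟩ := Subgroup.mem_zpowers_iff.mp (hg x)
  obtain ⟨q, rfl⟩ := Subgroup.mem_zpowers_iff.mp (hg y)
  rcases eq_or_ne p 0 with rfl | hp
  · exact ⟨1, 0, by simp⟩
  · exact ⟨q, p, .inr hp, by rw [← zpow_mul, ← zpow_mul, mul_comm]⟩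

theorem IsFreeGroup.exists_zpow_eq_zpow_of_commute {G : Type*} [Group G] [IsFreeGroup G]
    {x y : G} (h : Commute x y) : ∃ k l : ℤ, (k ≠ 0 ∨ l ≠ 0) ∧ x ^ k = y ^ l := by
  let H := Subgroup.closure {x, y}
  have : IsMulCommutative H := Subgroup.isMulCommutative_closure <| by
    rintro _ (rfl | rfl) _ (rfl | rfl) <;> first | rfl | exact h.eq | exact h.symm.eq
  have := IsFreeGroup.isCyclic H
  obtain ⟨k, l, hkl, hxy⟩ := IsCyclic.exists_zpow_eq_zpow
    (⟨x, Subgroup.subset_closure (by simp)⟩ : H) ⟨y, Subgroup.subset_closure (by simp)⟩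
  exact ⟨k, l, hkl, congrArg Subtype.val hxy⟩

theorem AffineEquiv.homothety_mul_constVAdd_mul_inv {R V : Type*} [CommRing R] [AddCommGroup V]
    [Module R V] (c : Rˣ) (v : V) :
    homothetyUnitsMulHom (0 : V) c * constVAdd R V v * (homothetyUnitsMulHom (0 : V) c)⁻¹ =
      constVAdd R V ((c : R) • v) := by
  ext z
  simp [inv_def, AffineMap.homothety_apply, smul_add, smul_smul]

namespace Wise

variable {n : ℕ}

def a (n : ℕ) : PresentedGroup (rels17 n) := PresentedGroup.mk _ a17
def b (n : ℕ) : PresentedGroup (rels17 n) := PresentedGroup.mk _ b17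
def s (n : ℕ) : PresentedGroup (rels17 n) := PresentedGroup.mk _ s17
def t (n : ℕ) : PresentedGroup (rels17 n) := PresentedGroup.mk _ t17

theorem commute_a_b : Commute (a n) (b n) := by
  have h := PresentedGroup.mk_eq_mk_of_mul_inv_mem (rels := rels17 n) (.inl rfl)
  rwa [map_mul, map_mul] at h

theorem s_mul_a_pow_mul_s_inv : s n * a n ^ n * (s n)⁻¹ = a n * b n := by
  have h := PresentedGroup.mk_eq_mk_of_mul_inv_mem (rels := rels17 n) (.inr (.inl rfl))
  rwa [map_mul, map_mul, map_mul, map_inv, map_pow] at h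

theorem t_mul_b_pow_mul_t_inv : t n * b n ^ n * (t n)⁻¹ = a n * b n := by
  have h := PresentedGroup.mk_eq_mk_of_mul_inv_mem (rels := rels17 n) (.inr (.inr rfl))
  rwa [map_mul, map_mul, map_mul, map_inv, map_pow] at h

section lift

variable {H : Type*} [Group H] {x y z w : H}

def lift (hxy : Commute x y) (hz : z * x ^ n * z⁻¹ = x * y) (hw : w * y ^ n * w⁻¹ = x * y) :
    PresentedGroup (rels17 n) →* H :=
  PresentedGroup.toGroup (f := ![x, y, z, w]) <| by
    rintro r (rfl | rfl | rfl) <;>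
      simp only [a17, b17, s17, t17, map_mul, map_inv, map_pow, FreeGroup.lift_apply_of] <;>
      rw [mul_inv_eq_one]
    exacts [hxy.eq, hz, hw]

theorem lift_a (hxy : Commute x y) (hz : z * x ^ n * z⁻¹ = x * y)
    (hw : w * y ^ n * w⁻¹ = x * y) : lift hxy hz hw (a n) = x :=
  PresentedGroup.toGroup.of _

theorem lift_b (hxy : Commute x y) (hz : z * x ^ n * z⁻¹ = x * y)
    (hw : w * y ^ n * w⁻¹ = x * y) : lift hxy hz hw (b n) = y :=
  PresentedGroup.toGroup.of _

end lift

theorem map_a_eq_one_and_map_b_eq_one (hn : 3 ≤ n)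
    (χ : PresentedGroup (rels17 n) →* Multiplicative ℤ) : χ (a n) = 1 ∧ χ (b n) = 1 := by
  set α := (χ (a n)).toAdd
  set β := (χ (b n)).toAdd
  have hα : (n : ℤ) * α = α + β := by
    simpa [α, β] using congrArg (Multiplicative.toAdd ∘ χ) s_mul_a_pow_mul_s_inv
  have hβ : (n : ℤ) * β = α + β := by
    simpa [α, β] using congrArg (Multiplicative.toAdd ∘ χ) t_mul_b_pow_mul_t_inv
  have hαβ : α = β := mul_left_cancel₀ (by omega) (hα.trans hβ.symm)
  have hα0 : α = 0 := by
    have : ((n : ℤ) - 2) * α = 0 := by linarith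
    exact (mul_eq_zero.mp this).resolve_left (by omega)
  exact ⟨Multiplicative.toAdd.injective hα0, Multiplicative.toAdd.injective (hαβ.symm.trans hα0)⟩

theorem exists_hom_affineEquiv (hn : n ≠ 0) {x y : ℝ} (hx : x ≠ 0) (hy : y ≠ 0)
    (hxy : x + y ≠ 0) : ∃ ψ : PresentedGroup (rels17 n) →* ℝ ≃ᵃ[ℝ] ℝ,
      ψ (a n) = AffineEquiv.constVAdd ℝ ℝ x ∧ ψ (b n) = AffineEquiv.constVAdd ℝ ℝ y := by
  have hadd : AffineEquiv.constVAdd ℝ ℝ x * AffineEquiv.constVAdd ℝ ℝ y =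
      AffineEquiv.constVAdd ℝ ℝ (x + y) :=
    ((AffineEquiv.constVAddHom ℝ ℝ).map_mul (.ofAdd x) (.ofAdd y)).symm
  have hconj {v : ℝ} (hv : v ≠ 0) : ∃ c : ℝˣ,
      AffineEquiv.homothetyUnitsMulHom (0 : ℝ) c * AffineEquiv.constVAdd ℝ ℝ v ^ n *
        (AffineEquiv.homothetyUnitsMulHom (0 : ℝ) c)⁻¹ =
      AffineEquiv.constVAdd ℝ ℝ x * AffineEquiv.constVAdd ℝ ℝ y := by
    refine ⟨Units.mk0 ((x + y) / (n * v)) (by positivity), ?_⟩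
    rw [← AffineEquiv.constVAdd_nsmul, AffineEquiv.homothety_mul_constVAdd_mul_inv, hadd,
      Units.val_mk0, nsmul_eq_mul, smul_eq_mul]
    congr 1
    field_simp
  obtain ⟨c, hc⟩ := hconj hx
  obtain ⟨d, hd⟩ := hconj hy
  have hcomm : Commute (AffineEquiv.constVAdd ℝ ℝ x) (AffineEquiv.constVAdd ℝ ℝ y) :=
    (Commute.all (Multiplicative.ofAdd x) (.ofAdd y)).map (AffineEquiv.constVAddHom ℝ ℝ)
  exact ⟨lift hcomm hc hd, lift_a .., lift_b ..⟩

theorem eq_zero_of_a_zpow_eq_b_zpow (hn : n ≠ 0) {k l : ℤ} (h : a n ^ k = b n ^ l) :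
    k = 0 ∧ l = 0 := by
  obtain ⟨ψ, hψa, hψb⟩ := exists_hom_affineEquiv hn one_ne_zero
    (Real.sqrt_ne_zero'.2 two_pos) (by positivity)
  have hkl : (k : ℝ) = l * √2 := by
    simpa [hψa, hψb, ← AffineEquiv.constVAdd_zsmul] using congrArg (fun g => ψ g 0) h
  have hl : l = 0 := by
    by_contra hl
    exact (irrational_sqrt_two.intCast_mul hl).ne_int k hkl.symm
  exact ⟨by simpa [hl] using hkl, hl⟩

end Wise

/-- Example 5.5: for `n ≥ 3`, Wise's group `Gₙ = ⟨a,b,s,t | [a,b], saⁿs⁻¹ = ab,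
tbⁿt⁻¹ = ab⟩` is not (finite rank free)-by-ℤ: there is no normal subgroup `N` isomorphic
to a free group of finite rank with `Gₙ/N ≅ ℤ` (the latter expressed by a surjective
homomorphism onto ℤ whose kernel is exactly `N`). -/
theorem Wise_nonsimple_not_free_by_Z (n : ℕ) (hn : 3 ≤ n) :
    ¬ ∃ N : Subgroup (PresentedGroup (rels17 n)), N.Normal ∧
      (∃ m : ℕ, Nonempty (N ≃* FreeGroup (Fin m))) ∧
      ∃ χ : PresentedGroup (rels17 n) →* Multiplicative ℤ,
        Function.Surjective χ ∧ χ.ker = N := by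
  rintro ⟨N, -, ⟨m, ⟨e⟩⟩, χ, -, rfl⟩
  have := IsFreeGroup.ofMulEquiv e.symm
  obtain ⟨ha, hb⟩ := Wise.map_a_eq_one_and_map_b_eq_one hn χ
  obtain ⟨k, l, hkl, h⟩ := IsFreeGroup.exists_zpow_eq_zpow_of_commute
    (x := (⟨Wise.a n, ha⟩ : χ.ker)) (y := ⟨Wise.b n, hb⟩) (Subtype.ext Wise.commute_a_b)
  have := Wise.eq_zero_of_a_zpow_eq_b_zpow (by omega) (congrArg Subtype.val h)
  omega
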